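/- arXiv:1903.12371 — 7 statements merged into one kernel-verified Lean document; each statement's English description precedes it below -/
import Mathlib

section
/- Fix a maximum matching ℳ of the bipartite graph Γ of 𝒜. If the pair (𝒜, ℋ) is structurally observable, then for every left node v left unmatched by ℳ, the contraction associated with v contains at least one state that is measured. -/
open Matrix

/-- Edge relation of the digraph of a pattern matrix: edge from `x_j` to `x_i` iff `𝒜 i j = 1`. -/
def digraphRel {n : ℕ} (𝒜 : Matrix (Fin n) (Fin n) Bool) : Fin n → Fin n → Prop :=
  fun j i => 𝒜 i j = true

/-- A state `j` is measured iff some row of the output pattern has a `1` in column `j`. -/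
def Measured {n : ℕ} {ρ : Type*} (ℋ : Matrix ρ (Fin n) Bool) (j : Fin n) : Prop :=
  ∃ i, ℋ i j = true

/-- A state node is Y-connected: a directed path to a measured state. -/
def YConnected {n : ℕ} {ρ : Type*} (𝒜 : Matrix (Fin n) (Fin n) Bool)
    (ℋ : Matrix ρ (Fin n) Bool) (x : Fin n) : Prop :=
  ∃ x', Relation.ReflTransGen (digraphRel 𝒜) x x' ∧ Measured ℋ x'

/-- Observability matrix stacking `H, HA, …, HA^(n-1)`. -/
noncomputable def obsMatrix {n : ℕ} {ρ : Type*} (A : Matrix (Fin n) (Fin n) ℝ)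
    (H : Matrix ρ (Fin n) ℝ) : Matrix (Fin n × ρ) (Fin n) ℝ :=
  Matrix.of fun p j => (H * A ^ (p.1 : ℕ)) p.2 j

/-- Structural observability of a pair of patterns. -/
def StructurallyObservable {n : ℕ} {ρ : Type*} (𝒜 : Matrix (Fin n) (Fin n) Bool)
    (ℋ : Matrix ρ (Fin n) Bool) : Prop :=
  ∃ (A : Matrix (Fin n) (Fin n) ℝ) (H : Matrix ρ (Fin n) ℝ),
    (∀ i j, 𝒜 i j = false → A i j = 0) ∧
    (∀ i j, ℋ i j = false → H i j = 0) ∧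
    (obsMatrix A H).rank = n

/-- Mutual reachability. -/
def SameSCC {V : Type*} (E : V → V → Prop) (u v : V) : Prop :=
  Relation.ReflTransGen E u v ∧ Relation.ReflTransGen E v u

/-- Strongly connected component: a nonempty, mutually reachable, maximal node set. -/
def IsSCC {V : Type*} (E : V → V → Prop) (S : Set V) : Prop :=
  S.Nonempty ∧ (∀ u ∈ S, ∀ v ∈ S, SameSCC E u v) ∧
    ∀ u v, v ∈ S → SameSCC E u v → u ∈ S

/-- Parent SCC: an SCC with no outgoing edge. -/
def IsParentSCC {V : Type*} (E : V → V → Prop) (S : Set V) : Prop :=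
  IsSCC E S ∧ ∀ u ∈ S, ∀ v, E u v → v ∈ S

/-- A matching of the bipartite graph of `𝒜`: edges `(left column j, right row i)`
with `𝒜 i j = 1`, no two sharing an endpoint. -/
def IsMatching {n : ℕ} (𝒜 : Matrix (Fin n) (Fin n) Bool)
    (M : Finset (Fin n × Fin n)) : Prop :=
  (∀ e ∈ M, 𝒜 e.2 e.1 = true) ∧
    ∀ e ∈ M, ∀ f ∈ M, e ≠ f → e.1 ≠ f.1 ∧ e.2 ≠ f.2

/-- Maximum matching of the bipartite graph of `𝒜`. -/
def IsMaxMatching {n : ℕ} (𝒜 : Matrix (Fin n) (Fin n) Bool)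
    (M : Finset (Fin n × Fin n)) : Prop :=
  IsMatching 𝒜 M ∧ ∀ M', IsMatching 𝒜 M' → M'.card ≤ M.card

/-- A left node `v` is unmatched by `M`. -/
def UnmatchedLeft {n : ℕ} (M : Finset (Fin n × Fin n)) (v : Fin n) : Prop :=
  ∀ e ∈ M, e.1 ≠ v

/-- One alternating step between left nodes: a non-matching edge from `u` to a right
node `r` followed by the matching edge from `r` back to a left node `w`. -/
def AltStep {n : ℕ} (𝒜 : Matrix (Fin n) (Fin n) Bool) (M : Finset (Fin n × Fin n))
    (u w : Fin n) : Prop :=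
  ∃ r : Fin n, 𝒜 r u = true ∧ (u, r) ∉ M ∧ (w, r) ∈ M

/-- The contraction associated with an unmatched left node `v`: all left nodes
reachable from `v` by `M`-alternating paths (including `v`). -/
def contractionOf {n : ℕ} (𝒜 : Matrix (Fin n) (Fin n) Bool)
    (M : Finset (Fin n × Fin n)) (v : Fin n) : Set (Fin n) :=
  {u | Relation.ReflTransGen (AltStep 𝒜 M) v u}

/-- Term rank of a pattern: the maximum number of `1`-entries, no two in the same
row or column. -/
noncomputable def termRank {m n : Type*} [Fintype m] [Fintype n]
    (A : Matrix m n Bool) : ℕ :=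
  sSup {k : ℕ | ∃ (r : Fin k → m) (c : Fin k → n),
    Function.Injective r ∧ Function.Injective c ∧ ∀ i, A (r i) (c i) = true}

/-- A cycle of the digraph of `𝒜`, as a nonempty duplicate-free list of state nodes. -/
def IsCycleList {n : ℕ} (𝒜 : Matrix (Fin n) (Fin n) Bool) (c : List (Fin n)) : Prop :=
  c ≠ [] ∧ c.Nodup ∧ c.Chain' (digraphRel 𝒜) ∧
    ∀ a ∈ c.head?, ∀ b ∈ c.getLast?, digraphRel 𝒜 b a

/-- A directed path of the system digraph through state nodes `c` ending at the
output node `y`. -/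
def IsYPathTo {n p : ℕ} (𝒜 : Matrix (Fin n) (Fin n) Bool) (ℋ : Matrix (Fin p) (Fin n) Bool)
    (c : List (Fin n)) (y : Fin p) : Prop :=
  c ≠ [] ∧ c.Nodup ∧ c.Chain' (digraphRel 𝒜) ∧ ∀ b ∈ c.getLast?, ℋ y b = true

/-- A family of pairwise node-disjoint cycles of `𝒢` and output-terminated paths of
`𝒢_sys` whose union covers every state node. Each family member is a list of state
nodes together with (for paths) the terminal output node. -/
def DisjointSpanningFamily {n p : ℕ} (𝒜 : Matrix (Fin n) (Fin n) Bool)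
    (ℋ : Matrix (Fin p) (Fin n) Bool) : Prop :=
  ∃ F : Finset (List (Fin n) × Option (Fin p)),
    (∀ e ∈ F, (e.2 = none ∧ IsCycleList 𝒜 e.1) ∨ ∃ y, e.2 = some y ∧ IsYPathTo 𝒜 ℋ e.1 y) ∧
    (∀ e ∈ F, ∀ f ∈ F, e ≠ f →
      (∀ x ∈ e.1, x ∉ f.1) ∧ ∀ y : Fin p, e.2 = some y → f.2 ≠ some y) ∧
    ∀ x : Fin n, ∃ e ∈ F, x ∈ e.1

/-!
Let `S` be the contraction of `v` and `N` the set of rows adjacent to `S`. Since `M` is maximum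
there is no augmenting path, so every row of `N` is matched to a node of `S`; as `v ∈ S` is
unmatched, `|N| < |S|`. The columns of `A` indexed by `S` are supported on `N`, so some `x ≠ 0`
supported on `S` has `A x = 0`. If no state of `S` were measured, then also `H x = 0`, so `x`
would lie in the kernel of the observability matrix, which has full column rank.
-/

theorem List.exists_nodup_isChain_cons_of_relationReflTransGen {α : Type*} {r : α → α → Prop}
    {a b : α} (h : Relation.ReflTransGen r a b) :
    ∃ l, IsChain r (a :: l) ∧ (a :: l).Nodup ∧ (a :: l).getLast (cons_ne_nil _ _) = b := by
  induction h using Relation.ReflTransGen.head_induction_on with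
  | refl => exact ⟨[], .singleton _, nodup_singleton _, rfl⟩
  | @head a c hac _ ih =>
    obtain ⟨l, hchain, hnodup, hlast⟩ := ih
    by_cases ha : a ∈ c :: l
    · obtain ⟨l₁, l₂, hsplit⟩ := append_of_mem ha
      rw [hsplit] at hchain hnodup
      refine ⟨l₂, hchain.right_of_append, hnodup.sublist (sublist_append_right _ _), ?_⟩
      rw [← hlast]
      simp [hsplit]
    · exact ⟨c :: l, hchain.cons_cons hac, nodup_cons.2 ⟨ha, hnodup⟩,
        by rwa [getLast_cons_cons]⟩

theorem Matrix.rank_eq_card_width_iff {m n K : Type*} [Fintype n] [Field K] (B : Matrix m n K) :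
    B.rank = Fintype.card n ↔ ∀ x, B *ᵥ x = 0 → x = 0 := by
  have h := B.mulVecLin.finrank_range_add_finrank_ker
  rw [Module.finrank_fintype_fun_eq_card] at h
  rw [← ker_mulVecLin_eq_bot_iff, ← Submodule.finrank_eq_zero, rank]
  omega

theorem Matrix.exists_ne_zero_mulVec_eq_zero_of_card_lt {m n K : Type*} [Fintype n] [Field K]
    (A : Matrix m n K) {S : Finset n} {N : Finset m} (hA : ∀ i ∉ N, ∀ j ∈ S, A i j = 0)
    (h : N.card < S.card) : ∃ x, x ≠ 0 ∧ (∀ j ∉ S, x j = 0) ∧ A *ᵥ x = 0 := by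
  classical
  set B := A.submatrix id ((↑) : S → n)
  have hB : B.rank < Fintype.card S := by
    refine (B.rank_le_card_of_support_subset N fun i hi => ?_).trans_lt (by simpa using h)
    by_contra hiN
    exact hi (funext fun j => hA i hiN j j.2)
  obtain ⟨f, hBf, hf⟩ : ∃ f, B *ᵥ f = 0 ∧ f ≠ 0 := by
    by_contra! hker
    exact hB.ne (B.rank_eq_card_width_iff.2 hker)
  obtain ⟨j₀, hj₀⟩ := Function.ne_iff.1 hf
  set x : n → K := fun j => if hj : j ∈ S then f ⟨j, hj⟩ else 0
  refine ⟨x, fun hx => hj₀ ?_, fun j hj => dif_neg hj, funext fun i => ?_⟩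
  · simpa [x] using congrFun hx j₀
  · calc (A *ᵥ x) i = ∑ j ∈ S, A i j * x j :=
          (Finset.sum_subset (Finset.subset_univ S) fun j _ hj => by simp [x, hj]).symm
      _ = ∑ j ∈ S.attach, A i j * x j := (Finset.sum_attach S _).symm
      _ = (B *ᵥ f) i := by simp [x, B, mulVec, dotProduct]
      _ = 0 := congrFun hBf i

theorem obsMatrix_mulVec_eq_zero {n : ℕ} {ρ : Type*} {A : Matrix (Fin n) (Fin n) ℝ}
    {H : Matrix ρ (Fin n) ℝ} {x : Fin n → ℝ} (hA : A *ᵥ x = 0) (hH : H *ᵥ x = 0) :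
    obsMatrix A H *ᵥ x = 0 := by
  funext ⟨k, i⟩
  change ((H * A ^ (k : ℕ)) *ᵥ x) i = 0
  rw [← mulVec_mulVec]
  rcases Nat.eq_zero_or_eq_succ_pred k with hk | hk
  · simp [hk, hH]
  · rw [hk, pow_succ, ← mulVec_mulVec, hA]
    simp

theorem UnmatchedLeft.mono {n : ℕ} {M M' : Finset (Fin n × Fin n)} {v : Fin n}
    (hv : UnmatchedLeft M v) (h : M' ⊆ M) : UnmatchedLeft M' v :=
  fun e he => hv e (h he)

theorem UnmatchedLeft.card_insert {n : ℕ} {M : Finset (Fin n × Fin n)} {u : Fin n}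
    (hu : UnmatchedLeft M u) (r : Fin n) : (insert (u, r) M).card = M.card + 1 :=
  Finset.card_insert_of_notMem fun h => hu _ h rfl

theorem UnmatchedLeft.card_insert_erase {n : ℕ} {M : Finset (Fin n × Fin n)} {v w r : Fin n}
    (hv : UnmatchedLeft M v) (hwr : (w, r) ∈ M) :
    (insert (v, r) (M.erase (w, r))).card = M.card := by
  rw [(hv.mono (Finset.erase_subset _ _)).card_insert, Finset.card_erase_add_one hwr]

namespace IsMatching

variable {n : ℕ} {𝒜 : Matrix (Fin n) (Fin n) Bool} {M : Finset (Fin n × Fin n)}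

theorem eq_of_fst_eq (hM : IsMatching 𝒜 M) {e f : Fin n × Fin n} (he : e ∈ M) (hf : f ∈ M)
    (h : e.1 = f.1) : e = f :=
  by_contra fun hne => (hM.2 e he f hf hne).1 h

theorem eq_of_snd_eq (hM : IsMatching 𝒜 M) {e f : Fin n × Fin n} (he : e ∈ M) (hf : f ∈ M)
    (h : e.2 = f.2) : e = f :=
  by_contra fun hne => (hM.2 e he f hf hne).2 h

theorem mono (hM : IsMatching 𝒜 M) {M' : Finset (Fin n × Fin n)} (h : M' ⊆ M) :
    IsMatching 𝒜 M' :=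
  ⟨fun e he => hM.1 e (h he), fun e he f hf => hM.2 e (h he) f (h hf)⟩

theorem insert_of_free (hM : IsMatching 𝒜 M) {u r : Fin n} (h : 𝒜 r u = true)
    (hu : UnmatchedLeft M u) (hr : ∀ e ∈ M, e.2 ≠ r) : IsMatching 𝒜 (insert (u, r) M) := by
  refine ⟨fun e he => ?_, fun e he f hf hne => ?_⟩
  · rcases Finset.mem_insert.1 he with rfl | he
    exacts [h, hM.1 e he]
  · rcases Finset.mem_insert.1 he with rfl | he <;> rcases Finset.mem_insert.1 hf with rfl | hf
    · exact absurd rfl hne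
    · exact ⟨fun h₁ => hu f hf h₁.symm, fun h₂ => hr f hf h₂.symm⟩
    · exact ⟨hu e he, hr e he⟩
    · exact hM.2 e he f hf hne

theorem insert_erase (hM : IsMatching 𝒜 M) {v w r : Fin n} (hwr : (w, r) ∈ M)
    (hv : UnmatchedLeft M v) (h : 𝒜 r v = true) :
    IsMatching 𝒜 (insert (v, r) (M.erase (w, r))) :=
  (hM.mono (Finset.erase_subset _ _)).insert_of_free h (hv.mono (Finset.erase_subset _ _))
    fun _ he hr => (Finset.mem_erase.1 he).1 (hM.eq_of_snd_eq (Finset.mem_of_mem_erase he) hwr hr)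

/-- The augmenting-path half of Berge's lemma. The first edge of the path is flipped, which
leaves a shorter alternating path for the new matching; the path being duplicate-free is what
keeps its remaining steps alternating. -/
theorem exists_card_lt_of_isChain_altStep (hM : IsMatching 𝒜 M) {v : Fin n}
    (hv : UnmatchedLeft M v) {l : List (Fin n)} (hl : (v :: l).IsChain (AltStep 𝒜 M))
    (hnodup : (v :: l).Nodup) {r : Fin n}
    (hr : 𝒜 r ((v :: l).getLast (List.cons_ne_nil _ _)) = true) (hfree : ∀ e ∈ M, e.2 ≠ r) :
    ∃ M', IsMatching 𝒜 M' ∧ M.card < M'.card := by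
  induction l generalizing M v with
  | nil =>
    refine ⟨_, hM.insert_of_free hr hv hfree, ?_⟩
    rw [List.getLast_singleton, hv.card_insert]
    omega
  | cons u l ih =>
    obtain ⟨⟨s, hsv, -, hus⟩, hl⟩ := List.isChain_cons_cons.1 hl
    obtain ⟨hvl, hnodup⟩ := List.nodup_cons.1 hnodup
    have hul : u ∉ l := (List.nodup_cons.1 hnodup).1
    set M₁ := insert (v, s) (M.erase (u, s))
    have hu₁ : UnmatchedLeft M₁ u := by
      intro e he heu
      rcases Finset.mem_insert.1 he with rfl | he
      · exact hvl (heu ▸ List.mem_cons_self)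
      · exact (Finset.mem_erase.1 he).1 (hM.eq_of_fst_eq (Finset.mem_of_mem_erase he) hus heu)
    have hl₁ : (u :: l).IsChain (AltStep 𝒜 M₁) := by
      refine hl.imp_of_mem_tail_imp fun a b ha hb ⟨t, hta, hat, hbt⟩ => ⟨t, hta, ?_, ?_⟩
      · intro hat₁
        rcases Finset.mem_insert.1 hat₁ with heq | hat₁
        · obtain rfl : a = v := congrArg Prod.fst heq
          exact hvl ha
        · exact hat (Finset.mem_of_mem_erase hat₁)
      · refine Finset.mem_insert_of_mem (Finset.mem_erase.2 ⟨fun heq => ?_, hbt⟩)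
        obtain rfl : b = u := congrArg Prod.fst heq
        exact hul hb
    have hfree₁ : ∀ e ∈ M₁, e.2 ≠ r := by
      intro e he
      rcases Finset.mem_insert.1 he with rfl | he
      exacts [fun h => hfree _ hus h, hfree e (Finset.mem_of_mem_erase he)]
    obtain ⟨M', hM', hlt⟩ := ih (hM.insert_erase hus hv hsv) hu₁ hl₁ hnodup
      (by rwa [List.getLast_cons_cons] at hr) hfree₁
    exact ⟨M', hM', hv.card_insert_erase hus ▸ hlt⟩

theorem card_lt_card_of_forall_mem (hM : IsMatching 𝒜 M) {S N : Finset (Fin n)} {v : Fin n}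
    (hvS : v ∈ S) (hv : UnmatchedLeft M v) (hN : ∀ r ∈ N, ∃ w ∈ S, (w, r) ∈ M) :
    N.card < S.card := by
  classical
  set P := M.filter (·.1 ∈ S)
  calc N.card ≤ (P.image Prod.snd).card := Finset.card_le_card fun r hr => by
          obtain ⟨w, hw, hwr⟩ := hN r hr
          exact Finset.mem_image.2 ⟨(w, r), Finset.mem_filter.2 ⟨hwr, hw⟩, rfl⟩
    _ ≤ P.card := Finset.card_image_le
    _ = (P.image Prod.fst).card := (Finset.card_image_of_injOn fun e he f hf =>
          hM.eq_of_fst_eq (Finset.mem_filter.1 he).1 (Finset.mem_filter.1 hf).1).symm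
    _ ≤ (S.erase v).card := Finset.card_le_card fun w hw => by
          obtain ⟨e, he, rfl⟩ := Finset.mem_image.1 hw
          exact Finset.mem_erase.2 ⟨hv e (Finset.mem_filter.1 he).1, (Finset.mem_filter.1 he).2⟩
    _ < S.card := Finset.card_erase_lt_of_mem hvS

end IsMatching

theorem IsMaxMatching.exists_mem_of_mem_contractionOf {n : ℕ} {𝒜 : Matrix (Fin n) (Fin n) Bool}
    {M : Finset (Fin n × Fin n)} (hM : IsMaxMatching 𝒜 M) {v u r : Fin n}
    (hv : UnmatchedLeft M v) (hu : u ∈ contractionOf 𝒜 M v) (hr : 𝒜 r u = true) :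
    ∃ w ∈ contractionOf 𝒜 M v, (w, r) ∈ M := by
  by_cases hmatched : ∃ e ∈ M, e.2 = r
  · obtain ⟨⟨w, s⟩, hws, hs⟩ := hmatched
    have hwr : (w, r) ∈ M := hs ▸ hws
    by_cases hur : (u, r) ∈ M
    · exact ⟨u, hu, hur⟩
    · exact ⟨w, hu.tail ⟨_, hr, hur, hwr⟩, hwr⟩
  · push Not at hmatched
    obtain ⟨l, hl, hnodup, rfl⟩ := List.exists_nodup_isChain_cons_of_relationReflTransGen hu
    obtain ⟨M', hM', hlt⟩ := hM.1.exists_card_lt_of_isChain_altStep hv hl hnodup hr hmatched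
    exact absurd (hM.2 M' hM') (not_le.2 hlt)

/-- If `(𝒜, ℋ)` is structurally observable then, for a fixed maximum
matching `M`, every contraction of an unmatched left node contains a measured state. -/
theorem stmt1 {n p : ℕ} (𝒜 : Matrix (Fin n) (Fin n) Bool)
    (M : Finset (Fin n × Fin n)) (hM : IsMaxMatching 𝒜 M)
    (ℋ : Matrix (Fin p) (Fin n) Bool)
    (hobs : StructurallyObservable 𝒜 ℋ) :
    ∀ v, UnmatchedLeft M v → ∃ u ∈ contractionOf 𝒜 M v, Measured ℋ u := by
  classical
  intro v hv
  by_contra! hunmeasured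
  obtain ⟨A, H, hA, hH, hrank⟩ := hobs
  set S := Finset.univ.filter (· ∈ contractionOf 𝒜 M v)
  set N := Finset.univ.filter fun r => ∃ j ∈ S, 𝒜 r j = true
  have hNS : N.card < S.card := by
    refine hM.1.card_lt_card_of_forall_mem (by simpa [S] using .refl) hv fun r hr => ?_
    obtain ⟨j, hj, hrj⟩ := (Finset.mem_filter.1 hr).2
    simpa [S] using hM.exists_mem_of_mem_contractionOf hv (Finset.mem_filter.1 hj).2 hrj
  have hAN : ∀ i ∉ N, ∀ j ∈ S, A i j = 0 := fun i hi j hj =>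
    hA i j (Bool.eq_false_iff.2 fun h => hi (by simpa [N] using ⟨j, hj, h⟩))
  obtain ⟨x, hx, hxS, hAx⟩ := A.exists_ne_zero_mulVec_eq_zero_of_card_lt hAN hNS
  have hHx : H *ᵥ x = 0 := by
    funext i
    simp only [mulVec, dotProduct, Pi.zero_apply]
    refine Finset.sum_eq_zero fun j _ => ?_
    by_cases hj : j ∈ S
    · have : ℋ i j = false :=
        Bool.eq_false_iff.2 fun h => hunmeasured j (by simpa [S] using hj) ⟨i, h⟩
      simp [hH i j this]
    · simp [hxS j hj]
  exact hx ((obsMatrix A H).rank_eq_card_width_iff.1 (by simpa using hrank) x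
    (obsMatrix_mulVec_eq_zero hAx hHx))
end

section
/- If the pair (𝒜, ℋ) is structurally observable, then every parent SCC of the digraph 𝒢 of 𝒜 contains at least one measured state. -/
open Matrix

/-!
Suppose a nonempty set `S` of states has no outgoing edge and contains no measured state.
Then the columns of `H` indexed by `S` vanish and the coordinate subspace spanned by `S` is
`A`-invariant, so the columns of every `H * A ^ k` indexed by `S` vanish as well: the
observability matrix has a zero column and cannot have rank `n`.
-/

namespace Matrix

variable {R ι κ : Type*}

theorem rank_lt_card_width_of_col_eq_zero [Field R] [Fintype ι] (A : Matrix κ ι R) {j : ι}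
    (hj : A.col j = 0) : A.rank < Fintype.card ι := by
  classical
  have hker : LinearMap.ker A.mulVecLin ≠ ⊥ := by
    refine (Submodule.ne_bot_iff _).2 ⟨Pi.single j 1, ?_, by simp⟩
    simpa [mulVec_single] using hj
  have hpos : 0 < Module.finrank R (LinearMap.ker A.mulVecLin) :=
    Module.finrank_pos_iff.2 (Submodule.nontrivial_iff_ne_bot.2 hker)
  have hrank_nullity := A.mulVecLin.finrank_range_add_finrank_ker
  rw [Module.finrank_fintype_fun_eq_card] at hrank_nullity
  change Module.finrank R (LinearMap.range A.mulVecLin) < _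
  omega

theorem mul_pow_apply_eq_zero_of_invariant [Semiring R] [Fintype ι] [DecidableEq ι]
    (A : Matrix ι ι R) (H : Matrix κ ι R) {S : Set ι} (hH : ∀ i, ∀ m ∈ S, H i m = 0)
    (hA : ∀ i ∉ S, ∀ m ∈ S, A i m = 0) (k : ℕ) (i : κ) {m : ι} (hm : m ∈ S) :
    (H * A ^ k) i m = 0 := by
  induction k generalizing m with
  | zero => simpa using hH i m hm
  | succ k ih =>
    rw [pow_succ, ← Matrix.mul_assoc, mul_apply]
    refine Finset.sum_eq_zero fun x _ => ?_
    by_cases hx : x ∈ S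
    · rw [ih hx, zero_mul]
    · rw [hA x hx m hm, mul_zero]

end Matrix

theorem exists_measured_of_isClosed {n : ℕ} {ρ : Type*} {𝒜 : Matrix (Fin n) (Fin n) Bool}
    {ℋ : Matrix ρ (Fin n) Bool} (hobs : StructurallyObservable 𝒜 ℋ) {S : Set (Fin n)}
    (hne : S.Nonempty) (hclosed : ∀ u ∈ S, ∀ v, digraphRel 𝒜 u v → v ∈ S) :
    ∃ u ∈ S, Measured ℋ u := by
  by_contra! hunmeasured
  obtain ⟨A, H, hA, hH, hrank⟩ := hobs
  obtain ⟨j, hj⟩ := hne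
  have hHS : ∀ i, ∀ m ∈ S, H i m = 0 := fun i m hm =>
    hH i m (Bool.not_eq_true _ ▸ fun h => hunmeasured m hm ⟨i, h⟩)
  have hAS : ∀ i ∉ S, ∀ m ∈ S, A i m = 0 := fun i hi m hm =>
    hA i m (Bool.not_eq_true _ ▸ fun h => hi (hclosed m hm i h))
  have hcol : (obsMatrix A H).col j = 0 :=
    funext fun q => Matrix.mul_pow_apply_eq_zero_of_invariant A H hHS hAS q.1 q.2 hj
  simpa [hrank] using (obsMatrix A H).rank_lt_card_width_of_col_eq_zero hcol

/-- If `(𝒜, ℋ)` is structurally observable then every parent SCC of the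
digraph of `𝒜` contains a measured state. -/
theorem stmt2 {n p : ℕ} (𝒜 : Matrix (Fin n) (Fin n) Bool)
    (ℋ : Matrix (Fin p) (Fin n) Bool)
    (hobs : StructurallyObservable 𝒜 ℋ) :
    ∀ S : Set (Fin n), IsParentSCC (digraphRel 𝒜) S → ∃ u ∈ S, Measured ℋ u :=
  fun _ hS => exists_measured_of_isClosed hobs hS.1.1 hS.2
end

section
/- Every state node of the system digraph 𝒢_sys is Y-connected if and only if every parent SCC of the digraph 𝒢 of 𝒜 contains at least one measured state. -/
/-!
A parent SCC is closed under reachability, so a measured state reachable from one of its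
nodes lies in it. Conversely, in a finite digraph, among the nodes reachable from `x` pick one,
`u`, whose reachable set is minimal for inclusion; every node reachable from `u` then reaches
`u` back, so the class of `u` under mutual reachability is a parent SCC, and a measured state
in it is reachable from `x`.
-/

open Matrix

open Relation

namespace SameSCC

variable {V : Type*} {E : V → V → Prop} {u v w : V}

theorem symm (h : SameSCC E u v) : SameSCC E v u := ⟨h.2, h.1⟩

theorem trans (h₁ : SameSCC E u v) (h₂ : SameSCC E v w) : SameSCC E u w :=
  ⟨h₁.1.trans h₂.1, h₂.2.trans h₁.2⟩

end SameSCC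

section

variable {V : Type*} {E : V → V → Prop}

theorem IsParentSCC.mem_of_reflTransGen {S : Set V} (hS : IsParentSCC E S) {u v : V}
    (hu : u ∈ S) (huv : ReflTransGen E u v) : v ∈ S := by
  induction huv with
  | refl => exact hu
  | tail _ hvw ih => exact hS.2 _ ih _ hvw

theorem isSCC_setOf_sameSCC (u : V) : IsSCC E {w | SameSCC E u w} :=
  ⟨⟨u, .refl, .refl⟩, fun _ ha _ hb => ha.symm.trans hb, fun _ _ hv hvw => hv.trans hvw.symm⟩

theorem isParentSCC_setOf_sameSCC {u : V}
    (hu : ∀ v, ReflTransGen E u v → ReflTransGen E v u) : IsParentSCC E {w | SameSCC E u w} := by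
  refine ⟨isSCC_setOf_sameSCC u, fun w huw v hwv => ?_⟩
  have huv : ReflTransGen E u v := huw.1.tail hwv
  exact ⟨huv, hu v huv⟩

/-- In a finite digraph every node reaches a node lying in a parent SCC. -/
theorem exists_reflTransGen_forall_reflTransGen_symm [Finite V] (x : V) :
    ∃ u, ReflTransGen E x u ∧ ∀ v, ReflTransGen E u v → ReflTransGen E v u := by
  obtain ⟨u, hxu, hmin⟩ := exists_minimalFor_of_wellFoundedLT (ReflTransGen E x)
    (fun u => {v | ReflTransGen E u v}) ⟨x, .refl⟩
  refine ⟨u, hxu, fun v huv => ?_⟩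
  have hsub : {w | ReflTransGen E v w} ⊆ {w | ReflTransGen E u w} := fun _ hw => huv.trans hw
  exact hmin (hxu.trans huv) hsub ReflTransGen.refl

end

/-- Every state node is Y-connected iff every parent SCC of the digraph
of `𝒜` contains a measured state. -/
theorem stmt5 {n p : ℕ} (𝒜 : Matrix (Fin n) (Fin n) Bool)
    (ℋ : Matrix (Fin p) (Fin n) Bool) :
    (∀ x, YConnected 𝒜 ℋ x) ↔
      ∀ S : Set (Fin n), IsParentSCC (digraphRel 𝒜) S → ∃ u ∈ S, Measured ℋ u := by
  constructor
  · intro hY S hS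
    obtain ⟨u, hu⟩ := hS.1.1
    obtain ⟨x', hux', hx'⟩ := hY u
    exact ⟨x', hS.mem_of_reflTransGen hu hux', hx'⟩
  · intro hP x
    obtain ⟨u, hxu, hu⟩ := exists_reflTransGen_forall_reflTransGen_symm (E := digraphRel 𝒜) x
    obtain ⟨u', huu', hu'⟩ := hP _ (isParentSCC_setOf_sameSCC hu)
    exact ⟨u', hxu.trans huu'.1, hu'⟩
end

section
/- Let A ∈ ℝ^{n×n}, let there be N agents with measurement matrices H_j ∈ ℝ^{p_j×n}, and let N_α(i), N_β(i) ⊆ {1,…,N} (with i ∈ N_α(i) and i ∈ N_β(i)) be the measurement-sharing and prediction-sharing neighborhoods of agent i. Let W ∈ ℝ^{N×N} satisfy w_{ij} = 0 for j ∉ N_β(i) and Σ_{j=1}^N w_{ij} = 1 for every i. Suppose sequences of vectors satisfy x_k = A x_{k−1} + v_{k−1} and y^j_k = H_j x_k + r^j_k, and each agent i computes x̂^i_{k|k−1} = Σ_{j∈N_β(i)} w_{ij} A x̂^j_{k−1|k−1} and x̂^i_{k|k} = x̂^i_{k|k−1} + K^i_k Σ_{j∈N_α(i)} H_j^⊤ (y^j_k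 − H_j x̂^i_{k|k−1}) for some gain matrices K^i_k ∈ ℝ^{n×n}. Define the errors e^i_k = x_k − x̂^i_{k|k} and their stacked vector e_k = (e^1_k; …; e^N_k) ∈ ℝ^{Nn}. Then e_k = (W ⊗ A − K_k D_H (W ⊗ A)) e_{k−1} + q_k, where ⊗ denotes the Kronecker product, K_k = blockdiag(K^1_k, …, K^N_k), D_H = blockdiag(Σ_{j∈N_α(1)} H_j^⊤ H_j, …, Σ_{j∈N_α(N)} H_j^⊤ H_j), and q_k stacks the vectors q^i_k = (I_n − K^i_k Σ_{j∈N_α(i)} H_j^⊤ H_j) v_{k−1} − K^i_k Σ_{j∈N_α(i)} H_j^⊤ r^j_k. -/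
/-!
Read block by block (through `Function.curry`), `(W ⊗ A) e_{k-1}` has `i`-th block
`zᵢ = ∑ⱼ wᵢⱼ A eʲ_{k-1}`; since row `i` of `W` sums to one and vanishes off `N_β(i)`,
this is `A x_{k-1} - x̂ⁱ_{k|k-1}`, so `x_k - x̂ⁱ_{k|k-1} = zᵢ + v_{k-1}`. By the measurement
model the innovation of agent `i` is `Dᵢ (zᵢ + v_{k-1}) + ∑ⱼ Hⱼᵀ rʲ_k`, and expanding the gain
update gives `eⁱ_k = zᵢ - Kⁱ_k Dᵢ zᵢ + qⁱ_k`, the `i`-th block of the claimed identity.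
-/

open Matrix

/-- Block-diagonal matrix on agent-state indices built from one `n × n` block per agent. -/
noncomputable def blockDiagAgents {N n : ℕ} (K : Fin N → Matrix (Fin n) (Fin n) ℝ) :
    Matrix (Fin N × Fin n) (Fin N × Fin n) ℝ :=
  Matrix.of fun pq rs => if pq.1 = rs.1 then K pq.1 pq.2 rs.2 else 0

theorem Function.curry_add {α β γ : Type*} [Add γ] (f g : α × β → γ) :
    Function.curry (f + g) = Function.curry f + Function.curry g :=
  rfl

theorem Function.curry_sub {α β γ : Type*} [Sub γ] (f g : α × β → γ) :
    Function.curry (f - g) = Function.curry f - Function.curry g :=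
  rfl

theorem curry_kroneckerMap_mulVec {R ι κ m o : Type*} [CommSemiring R] [Fintype κ] [Fintype o]
    (W : Matrix ι κ R) (A : Matrix m o R) (z : κ × o → R) (i : ι) :
    Function.curry (kroneckerMap (· * ·) W A *ᵥ z) i = ∑ j, W i j • (A *ᵥ Function.curry z j) := by
  ext a
  simp only [Function.curry_apply, mulVec, dotProduct, Fintype.sum_prod_type, kroneckerMap_apply,
    Finset.sum_apply, Pi.smul_apply, smul_eq_mul, Finset.mul_sum, mul_assoc]

theorem curry_blockDiagAgents_mulVec {N n : ℕ} (F : Fin N → Matrix (Fin n) (Fin n) ℝ)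
    (z : Fin N × Fin n → ℝ) (i : Fin N) :
    Function.curry (blockDiagAgents F *ᵥ z) i = F i *ᵥ Function.curry z i := by
  ext a
  simp only [Function.curry_apply, blockDiagAgents, mulVec, dotProduct, Fintype.sum_prod_type,
    of_apply, ite_mul, zero_mul, Finset.sum_ite_irrel, Finset.sum_const_zero, Finset.sum_ite_eq,
    Finset.mem_univ, if_true]

section Estimation

variable {R ι m : Type*} [CommRing R] [Fintype m]

theorem sum_smul_mulVec_sub_eq_of_sum_eq_one [Fintype ι] (A : Matrix m m R) (w : ι → R)
    (S : Finset ι) (hw0 : ∀ j ∉ S, w j = 0) (hw1 : ∑ j, w j = 1) (x : m → R) (xe : ι → m → R) :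
    ∑ j, w j • (A *ᵥ (x - xe j)) = A *ᵥ x - ∑ j ∈ S, w j • (A *ᵥ xe j) := by
  have hS : ∑ j ∈ S, w j • (A *ᵥ xe j) = ∑ j, w j • (A *ᵥ xe j) :=
    Finset.sum_subset (Finset.subset_univ S) fun j _ hj => by rw [hw0 j hj, zero_smul]
  simp only [hS, mulVec_sub, smul_sub, Finset.sum_sub_distrib, ← Finset.sum_smul, hw1, one_smul]

theorem sum_transpose_mulVec_innovation {p : ι → Type*} [∀ j, Fintype (p j)]
    (H : (j : ι) → Matrix (p j) m R) (S : Finset ι) (x xp : m → R) (r : (j : ι) → p j → R) :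
    ∑ j ∈ S, (H j)ᵀ *ᵥ (H j *ᵥ x + r j - H j *ᵥ xp)
      = (∑ j ∈ S, (H j)ᵀ * H j) *ᵥ (x - xp) + ∑ j ∈ S, (H j)ᵀ *ᵥ r j := by
  rw [Matrix.sum_mulVec, ← Finset.sum_add_distrib]
  refine Finset.sum_congr rfl fun j _ => ?_
  rw [add_sub_right_comm, ← mulVec_sub, mulVec_add, mulVec_mulVec]

theorem sub_gain_update_eq [DecidableEq m] (K D : Matrix m m R) (x xp z v s : m → R)
    (hz : x - xp = z + v) :
    x - (xp + K *ᵥ (D *ᵥ (x - xp) + s)) = z - K *ᵥ (D *ᵥ z) + ((1 - K * D) *ᵥ v - K *ᵥ s) := by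
  rw [sub_add_eq_sub_sub, hz, sub_mulVec, one_mulVec, ← mulVec_mulVec, mulVec_add, mulVec_add,
    mulVec_add]
  abel

end Estimation

theorem stmt9_general {n N : ℕ}
    (A : Matrix (Fin n) (Fin n) ℝ) (p : Fin N → ℕ)
    (H : (j : Fin N) → Matrix (Fin (p j)) (Fin n) ℝ)
    (Nα Nβ : Fin N → Finset (Fin N))
    (W : Matrix (Fin N) (Fin N) ℝ)
    (hW0 : ∀ i j, j ∉ Nβ i → W i j = 0)
    (hW1 : ∀ i, ∑ j, W i j = 1)
    (x v : ℕ → Fin n → ℝ)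
    (y r : (j : Fin N) → ℕ → Fin (p j) → ℝ)
    (hx : ∀ k, x (k + 1) = A.mulVec (x k) + v k)
    (hy : ∀ j k, y j k = (H j).mulVec (x k) + r j k)
    (K : Fin N → ℕ → Matrix (Fin n) (Fin n) ℝ)
    (xp xe : Fin N → ℕ → Fin n → ℝ)
    (hxp : ∀ i k, xp i (k + 1) = ∑ j ∈ Nβ i, W i j • A.mulVec (xe j k))
    (hxe : ∀ i k, xe i (k + 1) = xp i (k + 1) + (K i (k + 1)).mulVec
        (∑ j ∈ Nα i, (H j)ᵀ.mulVec (y j (k + 1) - (H j).mulVec (xp i (k + 1)))))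
    (e : ℕ → Fin N × Fin n → ℝ)
    (he : ∀ k i a, e k (i, a) = x k a - xe i k a)
    (q : ℕ → Fin N × Fin n → ℝ)
    (hq : ∀ k i, (fun a => q (k + 1) (i, a)) =
        (1 - K i (k + 1) * ∑ j ∈ Nα i, (H j)ᵀ * H j).mulVec (v k)
          - (K i (k + 1)).mulVec (∑ j ∈ Nα i, (H j)ᵀ.mulVec (r j (k + 1)))) :
    ∀ k, e (k + 1) =
      (Matrix.kroneckerMap (· * ·) W A
          - blockDiagAgents (fun i => K i (k + 1))
            * blockDiagAgents (fun i => ∑ j ∈ Nα i, (H j)ᵀ * H j)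
            * Matrix.kroneckerMap (· * ·) W A).mulVec (e k)
        + q (k + 1) := by
  intro k
  have he_block : ∀ k i, Function.curry (e k) i = x k - xe i k := fun k i => funext (he k i)
  refine Function.curry_injective (funext fun i => ?_)
  set z := Function.curry (kroneckerMap (· * ·) W A *ᵥ e k) i
  have hz : z = A *ᵥ x k - xp i (k + 1) := by
    simp only [z, curry_kroneckerMap_mulVec, he_block, hxp]
    exact sum_smul_mulVec_sub_eq_of_sum_eq_one A (W i) (Nβ i) (hW0 i) (hW1 i) _ _
  have hxpz : x (k + 1) - xp i (k + 1) = z + v k := by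
    rw [hz, hx]
    abel
  have hrhs : Function.curry ((kroneckerMap (· * ·) W A - blockDiagAgents (fun i => K i (k + 1))
        * blockDiagAgents (fun i => ∑ j ∈ Nα i, (H j)ᵀ * H j) * kroneckerMap (· * ·) W A) *ᵥ e k) i
      = z - K i (k + 1) *ᵥ ((∑ j ∈ Nα i, (H j)ᵀ * H j) *ᵥ z) := by
    rw [sub_mulVec, ← mulVec_mulVec, ← mulVec_mulVec, Function.curry_sub, Pi.sub_apply,
      curry_blockDiagAgents_mulVec, curry_blockDiagAgents_mulVec]
  rw [Function.curry_add, Pi.add_apply, hrhs, he_block, hxe,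
    show Function.curry (q (k + 1)) i = _ from hq k i]
  simp only [hy, sum_transpose_mulVec_innovation]
  exact sub_gain_update_eq _ _ _ _ _ _ _ hxpz

/-- The distributed inference error dynamics
`e_k = (W ⊗ A − K_k D_H (W ⊗ A)) e_{k−1} + q_k`. -/
theorem stmt9 {n N : ℕ}
    (A : Matrix (Fin n) (Fin n) ℝ) (p : Fin N → ℕ)
    (H : (j : Fin N) → Matrix (Fin (p j)) (Fin n) ℝ)
    (Nα Nβ : Fin N → Finset (Fin N))
    (hαmem : ∀ i, i ∈ Nα i) (hβmem : ∀ i, i ∈ Nβ i)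
    (W : Matrix (Fin N) (Fin N) ℝ)
    (hW0 : ∀ i j, j ∉ Nβ i → W i j = 0)
    (hW1 : ∀ i, ∑ j, W i j = 1)
    (x v : ℕ → Fin n → ℝ)
    (y r : (j : Fin N) → ℕ → Fin (p j) → ℝ)
    (hx : ∀ k, x (k + 1) = A.mulVec (x k) + v k)
    (hy : ∀ j k, y j k = (H j).mulVec (x k) + r j k)
    (K : Fin N → ℕ → Matrix (Fin n) (Fin n) ℝ)
    (xp xe : Fin N → ℕ → Fin n → ℝ)
    (hxp : ∀ i k, xp i (k + 1) = ∑ j ∈ Nβ i, W i j • A.mulVec (xe j k))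
    (hxe : ∀ i k, xe i (k + 1) = xp i (k + 1) + (K i (k + 1)).mulVec
        (∑ j ∈ Nα i, (H j)ᵀ.mulVec (y j (k + 1) - (H j).mulVec (xp i (k + 1)))))
    (e : ℕ → Fin N × Fin n → ℝ)
    (he : ∀ k i a, e k (i, a) = x k a - xe i k a)
    (q : ℕ → Fin N × Fin n → ℝ)
    (hq : ∀ k i, (fun a => q (k + 1) (i, a)) =
        (1 - K i (k + 1) * ∑ j ∈ Nα i, (H j)ᵀ * H j).mulVec (v k)
          - (K i (k + 1)).mulVec (∑ j ∈ Nα i, (H j)ᵀ.mulVec (r j (k + 1)))) :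
    ∀ k, e (k + 1) =
      (Matrix.kroneckerMap (· * ·) W A
          - blockDiagAgents (fun i => K i (k + 1))
            * blockDiagAgents (fun i => ∑ j ∈ Nα i, (H j)ᵀ * H j)
            * Matrix.kroneckerMap (· * ·) W A).mulVec (e k)
        + q (k + 1) :=
  stmt9_general A p H Nα Nβ W hW0 hW1 x v y r hx hy K xp xe hxp hxe e he q hq
end

section
/- Let N ≥ 1, n ≥ N, let S_1, …, S_N be nonempty pairwise disjoint subsets of {1, …, n}, and let c : {1,…,N} × {1,…,n} → ℝ be a cost function. Call an injective map f : {1,…,N} → {1,…,n} feasible if every set S_j contains f(i) for some agent i. Then feasible maps exist, and the minimum of Σ_{i=1}^N c(i, f(i)) over feasible maps f equals the minimum over permutations σ of {1,…,N} of Σ_{i=1}^N c̄(i, σ(i)), where c̄(i, j) = min_{l ∈ S_j} c(i, l). -/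
/-!
A feasible map `f` hits every `S j` at some agent `g j`; disjointness makes `g` injective, hence a
permutation, and then `c̄ (g j) j ≤ c (g j) (f (g j))` shows that the assignment cost of `g⁻¹` is at
most the sensing cost of `f`. Conversely, a permutation `σ` is realised by sending agent `i` to a
minimiser of `c i` on `S (σ i)`, which is injective again by disjointness. So both problems have the
same optimal value, attained at an optimal permutation.
-/

open Function

namespace SensingAssignment

variable {ι α β : Type*}

def reducedCost [LinearOrder β] (S : ι → Finset α) (hne : ∀ j, (S j).Nonempty) (c : ι → α → β)
    (i j : ι) : β :=
  (S j).inf' (hne j) (c i)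

def IsFeasible (S : ι → Finset α) (f : ι → α) : Prop :=
  Injective f ∧ ∀ j, ∃ i, f i ∈ S j

theorem eq_of_mem_of_mem {S : ι → Finset α} (hdisj : Pairwise (Disjoint on S)) {x : α}
    {j j' : ι} (hj : x ∈ S j) (hj' : x ∈ S j') : j = j' :=
  by_contra fun hne => Finset.disjoint_left.mp (hdisj hne) hj hj'

theorem isLeast_of_forall_exists_le [Preorder β] {A B : Set β} {t : β} (hB : IsLeast B t)
    (htA : t ∈ A) (hAB : ∀ a ∈ A, ∃ b ∈ B, b ≤ a) : IsLeast A t :=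
  ⟨htA, fun a ha => by
    obtain ⟨b, hb, hba⟩ := hAB a ha
    exact (hB.2 hb).trans hba⟩

variable [Fintype ι] [AddCommMonoid β] [LinearOrder β]
  {S : ι → Finset α} (hne : ∀ j, (S j).Nonempty) (c : ι → α → β)

theorem exists_isFeasible_sum_eq (hdisj : Pairwise (Disjoint on S)) (σ : Equiv.Perm ι) :
    ∃ f, IsFeasible S f ∧ ∑ i, c i (f i) = ∑ i, reducedCost S hne c i (σ i) := by
  choose m hm hval using fun i j => (S j).exists_mem_eq_inf' (hne j) (c i)
  refine ⟨fun i => m i (σ i),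
    ⟨fun i i' (h : m i (σ i) = m i' (σ i')) => ?_, fun j => ⟨σ.symm j, ?_⟩⟩, ?_⟩
  · exact σ.injective (eq_of_mem_of_mem hdisj (hm i (σ i)) (h ▸ hm i' (σ i')))
  · simpa using hm (σ.symm j) (σ (σ.symm j))
  · exact Finset.sum_congr rfl fun i _ => (hval i (σ i)).symm

theorem exists_perm_sum_le [IsOrderedAddMonoid β] [DecidableEq ι]
    (hdisj : Pairwise (Disjoint on S)) {f : ι → α} (hf : IsFeasible S f) :
    ∃ σ : Equiv.Perm ι, ∑ i, reducedCost S hne c i (σ i) ≤ ∑ i, c i (f i) := by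
  choose g hg using hf.2
  have hg_inj : Injective g := fun j j' h => eq_of_mem_of_mem hdisj (hg j) (h ▸ hg j')
  let τ := Equiv.ofBijective g hg_inj.bijective_of_finite
  refine ⟨τ.symm, ?_⟩
  calc ∑ i, reducedCost S hne c i (τ.symm i)
      = ∑ j, reducedCost S hne c (g j) j := by
        rw [← τ.sum_comp]; simp [τ]
    _ ≤ ∑ j, c (g j) (f (g j)) := Finset.sum_le_sum fun j _ => Finset.inf'_le _ (hg j)
    _ = ∑ i, c i (f i) := τ.sum_comp fun i => c i (f i)

end SensingAssignment

theorem stmt10_general {N n : ℕ}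
    (S : Fin N → Finset (Fin n)) (hne : ∀ j, (S j).Nonempty)
    (hdisj : ∀ j j', j ≠ j' → Disjoint (S j) (S j'))
    (c : Fin N → Fin n → ℝ) :
    (∃ f : Fin N → Fin n, Function.Injective f ∧ ∀ j, ∃ i, f i ∈ S j) ∧
    ∃ t : ℝ,
      IsLeast {t : ℝ | ∃ f : Fin N → Fin n,
        (Function.Injective f ∧ ∀ j, ∃ i, f i ∈ S j) ∧ ∑ i, c i (f i) = t} t ∧
      IsLeast {t : ℝ | ∃ σ : Equiv.Perm (Fin N),
        ∑ i, (S (σ i)).inf' (hne (σ i)) (c i) = t} t := by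
  open SensingAssignment in
  have hdisj' : Pairwise (Disjoint on S) := fun j j' => hdisj j j'
  obtain ⟨σ₀, hσ₀⟩ :=
    Finite.exists_min fun σ : Equiv.Perm (Fin N) => ∑ i, reducedCost S hne c i (σ i)
  have hperm : IsLeast {t | ∃ σ : Equiv.Perm (Fin N), ∑ i, reducedCost S hne c i (σ i) = t}
      (∑ i, reducedCost S hne c i (σ₀ i)) := ⟨⟨σ₀, rfl⟩, by rintro _ ⟨σ, rfl⟩; exact hσ₀ σ⟩
  obtain ⟨f₀, hf₀, hf₀_sum⟩ := exists_isFeasible_sum_eq hne c hdisj' σ₀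
  refine ⟨⟨f₀, hf₀⟩, _, isLeast_of_forall_exists_le hperm ⟨f₀, hf₀, hf₀_sum⟩ ?_, hperm⟩
  rintro _ ⟨f, hf, rfl⟩
  obtain ⟨σ, hσ⟩ := exists_perm_sum_le hne c hdisj' hf
  exact ⟨_, ⟨σ, rfl⟩, hσ⟩

/-- The sensing cost optimization over `N` pairwise disjoint nonempty
parent SCCs `S 1, …, S N` (choose an injective assignment of agents to states hitting
every `S j`) has the same minimum as the linear sum assignment problem with the
reduced costs `c̄ i j = min_{l ∈ S j} c i l`; moreover feasible maps exist. -/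
theorem stmt10 {N n : ℕ} (hN : 1 ≤ N) (hn : N ≤ n)
    (S : Fin N → Finset (Fin n)) (hne : ∀ j, (S j).Nonempty)
    (hdisj : ∀ j j', j ≠ j' → Disjoint (S j) (S j'))
    (c : Fin N → Fin n → ℝ) :
    (∃ f : Fin N → Fin n, Function.Injective f ∧ ∀ j, ∃ i, f i ∈ S j) ∧
    ∃ t : ℝ,
      IsLeast {t : ℝ | ∃ f : Fin N → Fin n,
        (Function.Injective f ∧ ∀ j, ∃ i, f i ∈ S j) ∧ ∑ i, c i (f i) = t} t ∧
      IsLeast {t : ℝ | ∃ σ : Equiv.Perm (Fin N),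
        ∑ i, (S (σ i)).inf' (hne (σ i)) (c i) = t} t :=
  stmt10_general S hne hdisj c
end

section
/- There exists a family consisting of cycles of 𝒢 and of directed paths of 𝒢_sys each ending at an output node, all pairwise node-disjoint on the state nodes, whose union contains every state node, if and only if the term rank of the (n+p)×n stacked pattern [𝒜; ℋ] equals n. -/
open Matrix

/-! Term rank `n` of `[𝒜; ℋ]` means an injective choice, for every column `j`, of a row `σ j`
with a `1` in column `j`, i.e. of an out-edge of every state node of `𝒢_sys` such that no two
of them share a head. A family of cycles and output-terminated paths as in the theorem yields
such a choice (successor along the cycle or path). Conversely the state-to-state edges chosen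
by `σ` form a partial injection, which decomposes into cycles and maximal paths; built edge by
edge, each new edge either closes a path into a cycle or joins two paths. A maximal path ends
at a node whose chosen edge goes to an output, and distinct paths get distinct outputs. -/

namespace List

variable {α : Type*} {R : α → α → Prop} {l : List α} {x : α}

theorem IsChain.getLast?_eq_of_forall_not_rel (hl : l.IsChain R) (hx : x ∈ l)
    (hR : ∀ y, ¬ R x y) : l.getLast? = some x := by
  obtain ⟨s, t, rfl⟩ := append_of_mem hx
  cases t with
  | nil => simp
  | cons y t => exact absurd (isChain_append_cons_cons.mp hl).2.1 (hR y)

theorem IsChain.head?_eq_of_forall_not_rel (hl : l.IsChain R) (hx : x ∈ l)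
    (hR : ∀ y, ¬ R y x) : l.head? = some x := by
  simpa using (isChain_reverse.mpr hl).getLast?_eq_of_forall_not_rel (mem_reverse.mpr hx) hR

variable [DecidableEq α]

theorem IsChain.rel_next (hl : l.IsChain R) (hnd : l.Nodup) (hx : x ∈ l)
    (hlast : l.getLast? ≠ some x) : R x (l.next x hx) := by
  obtain ⟨i, hi, rfl⟩ := getElem_of_mem hx
  have hi' : i + 1 < l.length := by
    by_contra! h
    apply hlast
    simp [getLast?_eq_getElem?, show l.length - 1 = i by omega]
  simp only [next_getElem l hnd i hi, Nat.mod_eq_of_lt hi']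
  exact isChain_iff_getElem.mp hl i hi'

theorem IsChain.rel_next_of_rel_getLast_head (hl : l.IsChain R) (hnd : l.Nodup)
    (hwrap : ∀ a ∈ l.head?, ∀ b ∈ l.getLast?, R b a) (hx : x ∈ l) :
    R x (l.next x hx) := by
  by_cases hlast : l.getLast? = some x
  · have hne : l ≠ [] := ne_nil_of_mem hx
    obtain rfl : l.getLast hne = x := by simpa [getLast?_eq_some_getLast hne] using hlast
    rw [next_getLast_eq_head l hne hnd]
    exact hwrap _ (head?_eq_some_head hne) _ hlast
  · exact hl.rel_next hnd hx hlast

theorem eq_of_next_eq_next (hnd : l.Nodup) {y : α} (hx : x ∈ l) (hy : y ∈ l)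
    (h : l.next x hx = l.next y hy) : x = y := by
  rw [← prev_next l hnd x hx, ← prev_next l hnd y hy]
  simp only [h]

end List

theorem termRank_eq_card_iff {m n : Type*} [Fintype m] [Fintype n] (A : Matrix m n Bool) :
    termRank A = Fintype.card n ↔
      ∃ σ : n → m, Function.Injective σ ∧ ∀ j, A (σ j) j = true := by
  set S := {k : ℕ | ∃ (r : Fin k → m) (c : Fin k → n),
    Function.Injective r ∧ Function.Injective c ∧ ∀ i, A (r i) (c i) = true}
  have hS : BddAbove S := ⟨Fintype.card n, fun k ⟨_, c, _, hc, _⟩ => by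
    simpa using Fintype.card_le_of_injective c hc⟩
  have hS₀ : S.Nonempty := ⟨0, Fin.elim0, Fin.elim0, fun i => i.elim0, fun i => i.elim0,
    fun i => i.elim0⟩
  constructor
  · intro h
    obtain ⟨r, c, hr, hc, hrc⟩ : Fintype.card n ∈ S := h ▸ Nat.sSup_mem hS₀ hS
    let e := Equiv.ofBijective c
      ((Fintype.bijective_iff_injective_and_card c).mpr ⟨hc, by simp⟩)
    refine ⟨r ∘ e.symm, hr.comp e.symm.injective, fun j => ?_⟩
    simpa [show c (e.symm j) = j from e.apply_symm_apply j] using hrc (e.symm j)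
  · rintro ⟨σ, hσ, hA⟩
    let e := (Fintype.equivFin n).symm
    refine le_antisymm (csSup_le hS₀ fun k hk => ?_) (le_csSup hS ?_)
    · obtain ⟨_, c, _, hc, _⟩ := hk
      simpa using Fintype.card_le_of_injective c hc
    · exact ⟨σ ∘ e, e, hσ.comp e.injective, e.injective, fun i => hA (e i)⟩

section PathCycleCover

variable {V : Type*} [DecidableEq V]

/-- A list whose last node is mapped to its head is a cycle of `f`; a list whose last node has
no image is a maximal path. -/
structure IsPathCycleCover (f : V → Option V) (F : Finset (List V)) : Prop where
  ne_nil : ∀ l ∈ F, l ≠ []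
  nodup : ∀ l ∈ F, l.Nodup
  isChain : ∀ l ∈ F, l.IsChain (fun a b => f a = some b)
  getLast? : ∀ l ∈ F, ∀ t ∈ l.getLast?, f t = none ∨ f t = l.head?
  disjoint : ∀ l ∈ F, ∀ l' ∈ F, l ≠ l' → l.Disjoint l'
  cover : ∀ x, ∃ l ∈ F, x ∈ l

theorem update_some_apply_of_eq_some {f : V → Option V} {x i a b : V} (hx : f x = none)
    (h : f a = some b) :
    Function.update f x (some i) a = some b := by
  rwa [Function.update_of_ne]
  rintro rfl
  simp_all

theorem isPathCycleCover_none [Fintype V] :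
    IsPathCycleCover (fun _ : V => none) (Finset.univ.image fun x => [x]) where
  ne_nil := by simp
  nodup := by simp
  isChain := by simp
  getLast? := by simp
  disjoint := by simpa using fun _ _ => Ne.symm
  cover x := ⟨[x], by simp⟩

namespace IsPathCycleCover

variable {f : V → Option V} {F : Finset (List V)} {P Q : List V} {x i : V}

theorem eq_of_mem (hF : IsPathCycleCover f F) {l l' : List V} (hl : l ∈ F) (hl' : l' ∈ F)
    (hx : x ∈ l) (hx' : x ∈ l') : l = l' := by
  by_contra h
  exact hF.disjoint l hl l' hl' h hx hx'

theorem close (hF : IsPathCycleCover f F) (hx : f x = none) (hP : P ∈ F)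
    (hlast : P.getLast? = some x) (hhead : P.head? = some i) :
    IsPathCycleCover (Function.update f x (some i)) F where
  ne_nil := hF.ne_nil
  nodup := hF.nodup
  isChain l hl := (hF.isChain l hl).imp fun _ _ => update_some_apply_of_eq_some hx
  getLast? l hl t ht := by
    by_cases htx : t = x
    · subst htx
      obtain rfl := hF.eq_of_mem hl hP (List.mem_of_getLast? ht) (List.mem_of_getLast? hlast)
      simp [hhead]
    · rw [Function.update_of_ne htx]
      exact hF.getLast? l hl t ht
  disjoint := hF.disjoint
  cover := hF.cover

theorem join (hF : IsPathCycleCover f F) (hx : f x = none) (hi : ∀ a, f a ≠ some i)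
    (hP : P ∈ F) (hQ : Q ∈ F) (hPQ : P ≠ Q) (hlast : P.getLast? = some x)
    (hhead : Q.head? = some i) :
    IsPathCycleCover (Function.update f x (some i)) (insert (P ++ Q) ((F.erase P).erase Q)) := by
  have hxP : x ∈ P := List.mem_of_getLast? hlast
  have hPQd : P.Disjoint Q := hF.disjoint P hP Q hQ hPQ
  have hchain : ∀ l ∈ F, l.IsChain (fun a b => Function.update f x (some i) a = some b) :=
    fun l hl => (hF.isChain l hl).imp fun _ _ => update_some_apply_of_eq_some hx
  have hmem : ∀ l, l ∈ insert (P ++ Q) ((F.erase P).erase Q) ↔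
      l = P ++ Q ∨ l ≠ Q ∧ l ≠ P ∧ l ∈ F := by
    simp [Finset.mem_insert, Finset.mem_erase]
  refine ⟨?_, ?_, ?_, ?_, ?_, ?_⟩
  · intro l hl
    rcases (hmem l).mp hl with rfl | ⟨-, -, hl⟩
    · simp [hF.ne_nil P hP]
    · exact hF.ne_nil l hl
  · intro l hl
    rcases (hmem l).mp hl with rfl | ⟨-, -, hl⟩
    · exact (hF.nodup P hP).append (hF.nodup Q hQ) hPQd
    · exact hF.nodup l hl
  · intro l hl
    rcases (hmem l).mp hl with rfl | ⟨-, -, hl⟩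
    · refine (hchain P hP).append (hchain Q hQ) fun a ha b hb => ?_
      simp_all
    · exact hchain l hl
  · intro l hl t ht
    have htx : t ≠ x := by
      rintro rfl
      rcases (hmem l).mp hl with rfl | ⟨-, hlP, hl⟩
      · rw [List.getLast?_append_of_ne_nil _ (hF.ne_nil Q hQ)] at ht
        exact hPQd hxP (List.mem_of_getLast? ht)
      · exact hF.disjoint P hP l hl hlP.symm hxP (List.mem_of_getLast? ht)
    rw [Function.update_of_ne htx]
    rcases (hmem l).mp hl with rfl | ⟨-, -, hl⟩
    · rw [List.getLast?_append_of_ne_nil _ (hF.ne_nil Q hQ)] at ht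
      rcases hF.getLast? Q hQ t ht with h | h
      · exact .inl h
      · exact absurd (h.trans hhead) (hi t)
    · exact hF.getLast? l hl t ht
  · have hnew : ∀ l ∈ F, l ≠ Q → l ≠ P → (P ++ Q).Disjoint l := fun l hl hlQ hlP =>
      List.disjoint_append_left.mpr
        ⟨hF.disjoint P hP l hl (Ne.symm hlP), hF.disjoint Q hQ l hl (Ne.symm hlQ)⟩
    intro l hl l' hl' hll'
    rcases (hmem l).mp hl with rfl | ⟨hlQ, hlP, hl⟩ <;>
      rcases (hmem l').mp hl' with rfl | ⟨hlQ', hlP', hl'⟩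
    · exact absurd rfl hll'
    · exact hnew l' hl' hlQ' hlP'
    · exact (hnew l hl hlQ hlP).symm
    · exact hF.disjoint l hl l' hl' hll'
  · intro y
    obtain ⟨l, hl, hy⟩ := hF.cover y
    by_cases hlPQ : l = P ∨ l = Q
    · refine ⟨P ++ Q, Finset.mem_insert_self _ _, ?_⟩
      rcases hlPQ with rfl | rfl <;> simp [hy]
    · obtain ⟨hlP, hlQ⟩ := not_or.mp hlPQ
      exact ⟨l, (hmem l).mpr (.inr ⟨hlQ, hlP, hl⟩), hy⟩

theorem update (hF : IsPathCycleCover f F) (hx : f x = none) (hi : ∀ a, f a ≠ some i) :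
    ∃ F', IsPathCycleCover (Function.update f x (some i)) F' := by
  obtain ⟨P, hP, hxP⟩ := hF.cover x
  obtain ⟨Q, hQ, hiQ⟩ := hF.cover i
  have hlast : P.getLast? = some x :=
    (hF.isChain P hP).getLast?_eq_of_forall_not_rel hxP (by simp [hx])
  have hhead : Q.head? = some i := (hF.isChain Q hQ).head?_eq_of_forall_not_rel hiQ hi
  by_cases hPQ : P = Q
  · subst hPQ
    exact ⟨F, hF.close hx hP hlast hhead⟩
  · exact ⟨_, hF.join hx hi hP hQ hPQ hlast hhead⟩

end IsPathCycleCover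

theorem exists_isPathCycleCover [Fintype V] (f : V → Option V)
    (hf : ∀ a b c, f a = some c → f b = some c → a = b) : ∃ F, IsPathCycleCover f F := by
  suffices ∀ D : Finset V, ∃ F, IsPathCycleCover (fun a => if a ∈ D then f a else none) F by
    simpa using this Finset.univ
  intro D
  induction D using Finset.induction_on with
  | empty => simpa using ⟨_, isPathCycleCover_none⟩
  | insert x D hxD ih =>
    obtain ⟨F, hF⟩ := ih
    have hupdate : (fun a => if a ∈ insert x D then f a else none) =
        Function.update (fun a => if a ∈ D then f a else none) x (f x) := by
      funext a
      by_cases hax : a = x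
      · subst hax; simp
      · simp [hax]
    rw [hupdate]
    cases hfx : f x with
    | none => exact ⟨F, by rwa [Function.update_eq_self_iff.mpr (by simp [hxD])]⟩
    | some i =>
      refine hF.update (by simp [hxD]) fun a ha => ?_
      split_ifs at ha with haD
      exact hxD (hf a x i ha hfx ▸ haD)

end PathCycleCover

section Stacked

variable {n p : ℕ} {𝒜 : Matrix (Fin n) (Fin n) Bool} {ℋ : Matrix (Fin p) (Fin n) Bool}

theorem DisjointSpanningFamily.exists_injective (h : DisjointSpanningFamily 𝒜 ℋ) :
    ∃ σ : Fin n → Fin n ⊕ Fin p, Function.Injective σ ∧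
      ∀ j, fromRows 𝒜 ℋ (σ j) j = true := by
  obtain ⟨F, hF, hdisj, hcover⟩ := h
  choose E hE hxE using hcover
  have hnodup : ∀ x, (E x).1.Nodup := fun x => by
    rcases hF _ (hE x) with ⟨-, hc⟩ | ⟨_, -, hc⟩ <;> exact hc.2.1
  have hEeq : ∀ {x x' z}, z ∈ (E x).1 → z ∈ (E x').1 → E x = E x' := fun hz hz' => by
    by_contra hne
    exact (hdisj _ (hE _) _ (hE _) hne).1 _ hz hz'
  let σ : Fin n → Fin n ⊕ Fin p := fun x =>
    if (E x).1.getLast? = some x then (E x).2.elim (.inl ((E x).1.next x (hxE x))) .inr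
    else .inl ((E x).1.next x (hxE x))
  have hσl : ∀ {x z}, σ x = .inl z → (E x).1.next x (hxE x) = z := by
    intro x z
    simp only [σ]
    split_ifs <;> cases (E x).2 <;> simp
  have hσr : ∀ {x y}, σ x = .inr y → (E x).1.getLast? = some x ∧ (E x).2 = some y := by
    intro x y
    simp only [σ]
    split_ifs <;> cases (E x).2 <;> simp_all
  refine ⟨σ, fun x x' hxx' => ?_, fun x => ?_⟩
  · cases hs : σ x with
    | inl z =>
      have hz := hσl hs
      have hz' := hσl (hxx' ▸ hs)
      have hEE := hEeq (hz ▸ List.next_mem _ _ _) (hz' ▸ List.next_mem _ _ _)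
      have hx' : x' ∈ (E x).1 := hEE ▸ hxE x'
      refine List.eq_of_next_eq_next (hnodup x) (hxE x) hx' (hz.trans ?_)
      rw [← hz']
      simp only [hEE]
    | inr y =>
      obtain ⟨hlast, hy⟩ := hσr hs
      obtain ⟨hlast', hy'⟩ := hσr (hxx' ▸ hs)
      have hEE : E x = E x' := by
        by_contra hne
        exact (hdisj _ (hE x) _ (hE x') hne).2 y hy hy'
      rw [hEE] at hlast
      exact Option.some_injective _ (hlast.symm.trans hlast')
  · rcases hF _ (hE x) with ⟨hnone, hcyc⟩ | ⟨y, hy, hpath⟩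
    · have hrel := hcyc.2.2.1.rel_next_of_rel_getLast_head hcyc.2.1 hcyc.2.2.2 (hxE x)
      simpa [σ, hnone, digraphRel] using hrel
    · by_cases hlast : (E x).1.getLast? = some x
      · simpa [σ, hlast, hy] using hpath.2.2.2 x hlast
      · have hrel := hpath.2.2.1.rel_next hpath.2.1 (hxE x) hlast
        simpa [σ, hlast, digraphRel] using hrel

theorem DisjointSpanningFamily.of_injective (σ : Fin n → Fin n ⊕ Fin p)
    (hσ : Function.Injective σ) (hA : ∀ j, fromRows 𝒜 ℋ (σ j) j = true) :
    DisjointSpanningFamily 𝒜 ℋ := by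
  set f : Fin n → Option (Fin n) := fun j => (σ j).getLeft?
  have hf : ∀ a b c, f a = some c → f b = some c → a = b := fun a b c ha hb => by
    simp only [f, Sum.getLeft?_eq_some_iff] at ha hb
    exact hσ (ha.trans hb.symm)
  obtain ⟨C, hC⟩ := exists_isPathCycleCover f hf
  set out : List (Fin n) → Option (Fin p) := fun l => l.getLast?.bind fun t => (σ t).getRight?
  have hout : ∀ l y, out l = some y → ∃ t, l.getLast? = some t ∧ σ t = .inr y := by
    simp [out, Option.bind_eq_some_iff, Sum.getRight?_eq_some_iff]
  have hchain : ∀ l ∈ C, l.IsChain (digraphRel 𝒜) := fun l hl =>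
    (hC.isChain l hl).imp fun a b hab => by
      simpa [f, Sum.getLeft?_eq_some_iff.mp hab, digraphRel] using hA a
  refine ⟨C.image fun l => (l, out l), ?_, ?_, ?_⟩
  · simp only [Finset.mem_image]
    rintro _ ⟨l, hl, rfl⟩
    obtain ⟨t, ht⟩ : ∃ t, l.getLast? = some t :=
      ⟨_, List.getLast?_eq_some_getLast (hC.ne_nil l hl)⟩
    rcases hC.getLast? l hl t ht with hnone | hwrap
    · obtain ⟨y, hy⟩ := Sum.isRight_iff.mp (Sum.getLeft?_eq_none_iff.mp hnone)
      refine .inr ⟨y, by simp [out, ht, hy], hC.ne_nil l hl, hC.nodup l hl, hchain l hl, ?_⟩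
      intro b hb
      obtain rfl : b = t := Option.some_injective _ (hb.symm.trans ht)
      simpa [hy] using hA b
    · obtain ⟨h, hh⟩ : ∃ h, l.head? = some h :=
        ⟨_, List.head?_eq_some_head (hC.ne_nil l hl)⟩
      have hσt : σ t = .inl h := Sum.getLeft?_eq_some_iff.mp (hwrap.trans hh)
      refine .inl ⟨by simp [out, ht, hσt], hC.ne_nil l hl, hC.nodup l hl, hchain l hl, ?_⟩
      intro a ha b hb
      obtain rfl : a = h := Option.some_injective _ (ha.symm.trans hh)
      obtain rfl : b = t := Option.some_injective _ (hb.symm.trans ht)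
      simpa [hσt, digraphRel] using hA b
  · simp only [Finset.mem_image]
    rintro _ ⟨l, hl, rfl⟩ _ ⟨l', hl', rfl⟩ hne
    have hll' : l ≠ l' := fun h => hne (h ▸ rfl)
    refine ⟨fun x hx hx' => hC.disjoint l hl l' hl' hll' hx hx', fun y hy hy' => ?_⟩
    obtain ⟨t, ht, hσt⟩ := hout l y hy
    obtain ⟨t', ht', hσt'⟩ := hout l' y hy'
    obtain rfl : t = t' := hσ (hσt.trans hσt'.symm)
    exact hC.disjoint l hl l' hl' hll' (List.mem_of_getLast? ht) (List.mem_of_getLast? ht')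
  · intro x
    obtain ⟨l, hl, hx⟩ := hC.cover x
    exact ⟨(l, out l), Finset.mem_image_of_mem _ hl, hx⟩

end Stacked

/-- A family of node-disjoint cycles and output-terminated paths
spanning all state nodes exists iff the term rank of the stacked pattern `[𝒜; ℋ]`
equals `n`. -/
theorem stmt15 {n p : ℕ} (𝒜 : Matrix (Fin n) (Fin n) Bool)
    (ℋ : Matrix (Fin p) (Fin n) Bool) :
    DisjointSpanningFamily 𝒜 ℋ ↔ termRank (Matrix.fromRows 𝒜 ℋ) = n := by
  have hrank := termRank_eq_card_iff (Matrix.fromRows 𝒜 ℋ)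
  rw [Fintype.card_fin] at hrank
  rw [hrank]
  exact ⟨DisjointSpanningFamily.exists_injective,
    fun ⟨σ, hσ, hA⟩ => DisjointSpanningFamily.of_injective σ hσ hA⟩
end

section
/- Fix a maximum matching ℳ of the bipartite graph Γ of 𝒜, let v_1, …, v_l be its unmatched left nodes with associated contractions C_1, …, C_l, and assume C_1, …, C_l are pairwise disjoint. If ℋ ∈ {0,1}^{l×n} is a pattern with exactly one entry equal to 1 in each row, the 1 of row r lying in a column belonging to C_r, then the term rank of the (n+l)×n stacked pattern [𝒜; ℋ] equals n. -/
open Matrix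

/-!
For each `r`, pick a duplicate-free alternating path from `v r` to the column of the `1` in
row `r` of `ℋ`; it lies in the `r`-th contraction, so these paths are pairwise disjoint. Shift
the matching along every path: each path node takes the matched row of its successor, the last
node takes row `r` of `ℋ`, and every node off the paths keeps its matched row (it is matched,
since all unmatched nodes start paths). The assignment is `τ ∘ σ`, where `σ` rotates each path
cyclically (`List.formPerm`, which sends its last node to `v r`) and `τ` sends `v r` to row `r`
of `ℋ` and any other node to its matched row; both maps are injective.
-/

open Function

namespace List

variable {α : Type*} {R : α → α → Prop}

theorem exists_nodup_isChain_cons_of_relationReflTransGen_s16 {a b : α}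
    (h : Relation.ReflTransGen R a b) :
    ∃ t, (a :: t).IsChain R ∧ (a :: t).getLast (cons_ne_nil a t) = b ∧ (a :: t).Nodup := by
  induction h using Relation.ReflTransGen.head_induction_on with
  | refl => exact ⟨[], isChain_singleton b, rfl, nodup_singleton b⟩
  | @head a c hac _ ih =>
    obtain ⟨t, hchain, hlast, hnd⟩ := ih
    by_cases ha : a ∈ c :: t
    · obtain ⟨s, u, hsu⟩ := append_of_mem ha
      have hsuf : a :: u <:+ c :: t := hsu ▸ suffix_append s (a :: u)
      refine ⟨u, hchain.suffix hsuf, ?_, hnd.sublist hsuf.sublist⟩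
      rw [← hlast]
      simp only [hsu]
      exact (getLast_append_of_ne_nil _ _).symm
    · exact ⟨c :: t, isChain_cons_cons.mpr ⟨hac, hchain⟩, by rw [getLast_cons_cons, hlast],
        nodup_cons.mpr ⟨ha, hnd⟩⟩

theorem IsChain.relationReflTransGen_of_mem {a x : α} {t : List α} (h : (a :: t).IsChain R)
    (hx : x ∈ a :: t) : Relation.ReflTransGen R a x := by
  rcases mem_cons.mp hx with rfl | hx
  · exact .refl
  · exact h.cons_induction _ t (fun _ _ hxy hx => hx.tail hxy) .refl x hx

variable [DecidableEq α]

theorem IsChain.rel_formPerm {l : List α} (h : l.IsChain R) (hnd : l.Nodup) {x : α}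
    (hx : x ∈ l) (hlast : x ≠ l.getLast (ne_nil_of_mem hx)) : R x (l.formPerm x) := by
  obtain ⟨i, hi, rfl⟩ := getElem_of_mem hx
  have hi' : i + 1 < l.length := by
    by_contra hge
    exact hlast (by rw [getLast_eq_getElem]; congr; omega)
  rw [formPerm_apply_lt_getElem l hnd i hi']
  exact isChain_iff_getElem.mp h i hi'

end List

theorem exists_injective_eq_formPerm {α ι : Type*} [DecidableEq α] (L : ι → List α)
    (hL : ∀ i j x, x ∈ L i → x ∈ L j → i = j) :
    ∃ σ : α → α, Injective σ ∧ (∀ i, ∀ x ∈ L i, σ x = (L i).formPerm x) ∧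
      ∀ x, (∀ i, x ∉ L i) → σ x = x := by
  classical
  let σ x := if h : ∃ i, x ∈ L i then (L h.choose).formPerm x else x
  have hσL : ∀ i, ∀ x ∈ L i, σ x = (L i).formPerm x := by
    intro i x hx
    have h : ∃ i, x ∈ L i := ⟨i, hx⟩
    simp only [σ, dif_pos h, hL _ _ _ h.choose_spec hx]
  have hσoff : ∀ x, (∀ i, x ∉ L i) → σ x = x := fun x hx => dif_neg (by simpa using hx)
  refine ⟨σ, fun x y hxy => ?_, hσL, hσoff⟩
  by_cases hx : ∃ i, x ∈ L i <;> by_cases hy : ∃ i, y ∈ L i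
  · obtain ⟨i, hxi⟩ := hx
    obtain ⟨j, hyj⟩ := hy
    rw [hσL i x hxi, hσL j y hyj] at hxy
    have hij : i = j :=
      hL _ _ _ (List.formPerm_apply_mem_of_mem hxi) (hxy ▸ List.formPerm_apply_mem_of_mem hyj)
    subst hij
    exact (L i).formPerm.injective hxy
  · obtain ⟨i, hxi⟩ := hx
    simp only [not_exists] at hy
    rw [hσL i x hxi, hσoff y hy] at hxy
    exact absurd (hxy ▸ List.formPerm_apply_mem_of_mem hxi) (hy i)
  · obtain ⟨j, hyj⟩ := hy
    simp only [not_exists] at hx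
    rw [hσoff x hx, hσL j y hyj] at hxy
    exact absurd (hxy ▸ List.formPerm_apply_mem_of_mem hyj) (hx j)
  · simp only [not_exists] at hx hy
    rwa [hσoff x hx, hσoff y hy] at hxy

theorem termRank_eq_card_of_injective {m n : Type*} [Fintype m] [Fintype n] (A : Matrix m n Bool)
    {f : n → m} (hf : Injective f) (hA : ∀ j, A (f j) j = true) :
    termRank A = Fintype.card n := by
  let e := Fintype.equivFin n
  refine IsGreatest.csSup_eq ⟨⟨f ∘ e.symm, e.symm, hf.comp e.symm.injective, e.symm.injective,
    fun i => hA _⟩, ?_⟩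
  rintro k ⟨-, c, -, hc, -⟩
  simpa using Fintype.card_le_of_injective c hc

namespace IsMatching

variable {n : ℕ} {𝒜 : Matrix (Fin n) (Fin n) Bool} {M : Finset (Fin n × Fin n)}

theorem left_eq (hM : IsMatching 𝒜 M) {a b s : Fin n} (ha : (a, s) ∈ M) (hb : (b, s) ∈ M) :
    a = b := by
  by_contra hab
  exact (hM.2 _ ha _ hb fun h => hab (congrArg Prod.fst h)).2 rfl

theorem right_eq (hM : IsMatching 𝒜 M) {u s s' : Fin n} (hs : (u, s) ∈ M) (hs' : (u, s') ∈ M) :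
    s = s' := by
  by_contra hss
  exact (hM.2 _ hs _ hs' fun h => hss (congrArg Prod.snd h)).1 rfl

theorem exists_mem_of_not_unmatchedLeft {u : Fin n} (hu : ¬UnmatchedLeft M u) :
    ∃ s, (u, s) ∈ M := by
  simp only [UnmatchedLeft, not_forall, not_not] at hu
  obtain ⟨e, he, rfl⟩ := hu
  exact ⟨e.2, he⟩

theorem exists_injective_sum {l : ℕ} (hM : IsMatching 𝒜 M) {v : Fin l → Fin n} (hv : Injective v)
    (hcover : ∀ u, UnmatchedLeft M u → ∃ r, v r = u) :
    ∃ τ : Fin n → Fin n ⊕ Fin l, Injective τ ∧ (∀ r, τ (v r) = .inr r) ∧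
      ∀ u s, u ∉ Set.range v → (u, s) ∈ M → τ u = .inl s := by
  classical
  have hmate : ∀ u, u ∉ Set.range v → ∃ s, (u, s) ∈ M := fun u hu =>
    exists_mem_of_not_unmatchedLeft fun hun => hu (hcover u hun)
  let τ : Fin n → Fin n ⊕ Fin l := fun u =>
    if h : u ∈ Set.range v then .inr h.choose else .inl (hmate u h).choose
  have hτv : ∀ r, τ (v r) = .inr r := fun r => by
    simp only [τ, dif_pos (Set.mem_range_self r), Sum.inr.injEq]
    exact hv (Set.mem_range_self r).choose_spec
  have hτM : ∀ u s, u ∉ Set.range v → (u, s) ∈ M → τ u = .inl s := fun u s hu hs => by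
    simp only [τ, dif_neg hu, Sum.inl.injEq]
    exact hM.right_eq (hmate u hu).choose_spec hs
  refine ⟨τ, fun u u' huu => ?_, hτv, hτM⟩
  by_cases hu : u ∈ Set.range v <;> by_cases hu' : u' ∈ Set.range v
  · obtain ⟨r, rfl⟩ := hu
    obtain ⟨r', rfl⟩ := hu'
    rw [hτv, hτv, Sum.inr.injEq] at huu
    rw [huu]
  · obtain ⟨r, rfl⟩ := hu
    obtain ⟨s', hs'⟩ := hmate u' hu'
    rw [hτv, hτM u' s' hu' hs'] at huu
    cases huu
  · obtain ⟨r', rfl⟩ := hu'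
    obtain ⟨s, hs⟩ := hmate u hu
    rw [hτv, hτM u s hu hs] at huu
    cases huu
  · obtain ⟨s, hs⟩ := hmate u hu
    obtain ⟨s', hs'⟩ := hmate u' hu'
    rw [hτM u s hu hs, hτM u' s' hu' hs', Sum.inl.injEq] at huu
    exact hM.left_eq hs (huu ▸ hs')

end IsMatching

theorem exists_injective_rows_of_disjoint_alternating_paths {n l : ℕ}
    {𝒜 : Matrix (Fin n) (Fin n) Bool} {M : Finset (Fin n × Fin n)} (hM : IsMatching 𝒜 M)
    {v : Fin l → Fin n} (hcover : ∀ u, UnmatchedLeft M u → ∃ r, v r = u)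
    (T : Fin l → List (Fin n)) (hchain : ∀ r, (v r :: T r).IsChain (AltStep 𝒜 M))
    (hnodup : ∀ r, (v r :: T r).Nodup)
    (hdisj : ∀ r r' x, x ∈ v r :: T r → x ∈ v r' :: T r' → r = r')
    {ℋ : Matrix (Fin l) (Fin n) Bool}
    (hℋ : ∀ r, ℋ r ((v r :: T r).getLast (List.cons_ne_nil _ _)) = true) :
    ∃ f : Fin n → Fin n ⊕ Fin l, Injective f ∧ ∀ j, Matrix.fromRows 𝒜 ℋ (f j) j = true := by
  have hv : Injective v := fun r r' h =>
    hdisj r r' (v r) List.mem_cons_self (h ▸ List.mem_cons_self)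
  obtain ⟨σ, hσ, hσL, hσoff⟩ := exists_injective_eq_formPerm (fun r => v r :: T r) hdisj
  obtain ⟨τ, hτ, hτv, hτM⟩ := hM.exists_injective_sum hv hcover
  refine ⟨τ ∘ σ, hτ.comp hσ, fun j => ?_⟩
  by_cases hj : ∃ r, j ∈ v r :: T r
  · obtain ⟨r, hjr⟩ := hj
    by_cases hlast : j = (v r :: T r).getLast (List.cons_ne_nil _ _)
    · have hσj : σ j = v r := by rw [hσL r j hjr, hlast, List.formPerm_apply_getLast]
      rw [Function.comp_apply, hσj, hτv, Matrix.fromRows_apply_inr, hlast]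
      exact hℋ r
    · obtain ⟨s, hsj, -, hs⟩ := (hchain r).rel_formPerm (hnodup r) hjr hlast
      rw [← hσL r j hjr] at hs
      have hnotv : σ j ∉ Set.range v := by
        rintro ⟨r', hr'⟩
        obtain rfl : r = r' := hdisj r r' _
          (hσL r j hjr ▸ List.formPerm_apply_mem_of_mem hjr) (hr' ▸ List.mem_cons_self)
        refine hlast (hσ ?_)
        rw [← hr', hσL r _ (List.getLast_mem _), List.formPerm_apply_getLast]
      rw [Function.comp_apply, hτM _ s hnotv hs, Matrix.fromRows_apply_inl]
      exact hsj
  · simp only [not_exists] at hj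
    have hnotv : j ∉ Set.range v := fun ⟨r, hr⟩ => hj r (hr ▸ List.mem_cons_self)
    obtain ⟨s, hs⟩ := IsMatching.exists_mem_of_not_unmatchedLeft fun hun => hnotv (hcover j hun)
    rw [Function.comp_apply, hσoff j hj, hτM j s hnotv hs, Matrix.fromRows_apply_inl]
    exact hM.1 _ hs

theorem stmt16_general {n l : ℕ} (𝒜 : Matrix (Fin n) (Fin n) Bool)
    (M : Finset (Fin n × Fin n)) (hM : IsMaxMatching 𝒜 M)
    (v : Fin l → Fin n)
    (hvall : ∀ u, UnmatchedLeft M u → ∃ r, v r = u)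
    (hdisj : ∀ r r', r ≠ r' →
      Disjoint (contractionOf 𝒜 M (v r)) (contractionOf 𝒜 M (v r')))
    (ℋ : Matrix (Fin l) (Fin n) Bool)
    (hrow : ∀ r, ∃! j, ℋ r j = true)
    (hcol : ∀ r j, ℋ r j = true → j ∈ contractionOf 𝒜 M (v r)) :
    termRank (Matrix.fromRows 𝒜 ℋ) = n := by
  choose j hj using fun r => (hrow r).exists
  choose T hchain hlast hnodup using fun r =>
    List.exists_nodup_isChain_cons_of_relationReflTransGen_s16 (hcol r (j r) (hj r))
  have hpaths : ∀ r r' x, x ∈ v r :: T r → x ∈ v r' :: T r' → r = r' := fun r r' x hx hx' =>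
    by_contra fun hne => Set.disjoint_left.mp (hdisj r r' hne)
      ((hchain r).relationReflTransGen_of_mem hx) ((hchain r').relationReflTransGen_of_mem hx')
  obtain ⟨f, hf, hfA⟩ := exists_injective_rows_of_disjoint_alternating_paths hM.1 hvall T hchain
    hnodup hpaths (fun r => hlast r ▸ hj r)
  simpa using termRank_eq_card_of_injective _ hf hfA

/-- If the contractions `C r = contractionOf 𝒜 M (v r)` of the
unmatched left nodes `v 1, …, v l` are pairwise disjoint and `ℋ` has exactly one `1`
per row, the `1` of row `r` lying in a column of the `r`-th contraction, then the
stacked pattern `[𝒜; ℋ]` has full term rank `n`. -/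
theorem stmt16 {n l : ℕ} (𝒜 : Matrix (Fin n) (Fin n) Bool)
    (M : Finset (Fin n × Fin n)) (hM : IsMaxMatching 𝒜 M)
    (v : Fin l → Fin n) (hvinj : Function.Injective v)
    (hvunm : ∀ r, UnmatchedLeft M (v r))
    (hvall : ∀ u, UnmatchedLeft M u → ∃ r, v r = u)
    (hdisj : ∀ r r', r ≠ r' →
      Disjoint (contractionOf 𝒜 M (v r)) (contractionOf 𝒜 M (v r')))
    (ℋ : Matrix (Fin l) (Fin n) Bool)
    (hrow : ∀ r, ∃! j, ℋ r j = true)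
    (hcol : ∀ r j, ℋ r j = true → j ∈ contractionOf 𝒜 M (v r)) :
    termRank (Matrix.fromRows 𝒜 ℋ) = n :=
  stmt16_general 𝒜 M hM v hvall hdisj ℋ hrow hcol
end
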